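/- arXiv:1301.4428 — 2 statements merged into one kernel-verified Lean document; each statement's English description precedes it below -/
import Mathlib

section
/- Assume E(X_0^β) < ∞. Then Σ_{j=1}^∞ b^j Y_j = +∞ almost surely. -/
open MeasureTheory Set

/-- The Beta distribution `Beta(a, c)` on `(0, 1)`. -/
noncomputable def betaMeas (a c : ℝ) : Measure ℝ :=
  (volume : Measure ℝ).withDensity fun x =>
    ENNReal.ofReal
      (if 0 < x ∧ x < 1 then
        Real.Gamma (a + c) / (Real.Gamma a * Real.Gamma c) * x ^ (a - 1) * (1 - x) ^ (c - 1)
      else 0)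

/-- The Gamma distribution `Γ(lam, r)` on `(0, ∞)` with rate `lam` and shape `r`. -/
noncomputable def gammaMeas (lam r : ℝ) : Measure ℝ :=
  (volume : Measure ℝ).withDensity fun x =>
    ENNReal.ofReal
      (if 0 < x then lam ^ r * x ^ (r - 1) * Real.exp (-(lam * x)) / Real.Gamma r else 0)

/-!
Every `W n` lies in `(0, 1)`, so `X n ≤ bⁿ X₀` and hence `bⁿ⁺¹ Y (n + 1) ≥ G n / X₀`.
The `G n` are i.i.d. and almost surely positive, so `P (G n ≥ c) > 0` for some `c > 0`, and the
second Borel–Cantelli lemma gives `G n ≥ c` infinitely often; thus `∑ G n = ∞` almost surely,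
and with it `∑ bʲ Yⱼ`.
-/

open Filter ProbabilityTheory

lemma ae_mem_Ioo_betaMeas (a c : ℝ) : ∀ᵐ x ∂betaMeas a c, x ∈ Ioo 0 1 := by
  refine (mem_ae_iff (s := Ioo 0 1)).2 ?_
  rw [betaMeas, withDensity_apply _ measurableSet_Ioo.compl,
    setLIntegral_congr_fun measurableSet_Ioo.compl fun x (hx : ¬ (0 < x ∧ x < 1)) => ?_,
    lintegral_zero]
  simp [hx]

lemma ae_pos_gammaMeas (lam r : ℝ) : ∀ᵐ x ∂gammaMeas lam r, 0 < x := by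
  refine (mem_ae_iff (s := Ioi 0)).2 ?_
  rw [gammaMeas, withDensity_apply _ measurableSet_Ioi.compl,
    setLIntegral_congr_fun measurableSet_Ioi.compl fun x (hx : ¬ 0 < x) => ?_, lintegral_zero]
  simp [hx]

lemma ae_forall_of_map_eq {Ω ι E : Type*} [MeasurableSpace Ω] [MeasurableSpace E] [Countable ι]
    {P : Measure Ω} {μ : Measure E} {f : ι → Ω → E} (hf : ∀ i, AEMeasurable (f i) P)
    (hlaw : ∀ i, P.map (f i) = μ) {p : E → Prop} (h : ∀ᵐ x ∂μ, p x) :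
    ∀ᵐ ω ∂P, ∀ i, p (f i ω) :=
  ae_all_iff.2 fun i => ae_of_ae_map (hf i) (by rwa [hlaw i])

lemma exists_pos_measure_Ici_ne_zero {μ : Measure ℝ} [NeZero μ] (h : ∀ᵐ x ∂μ, 0 < x) :
    ∃ c > 0, μ (Ici c) ≠ 0 := by
  by_contra! hc
  have hIoi : ⋃ n : ℕ, Ici (1 / (n + 1 : ℝ)) = Ioi 0 :=
    iUnion_Ici_eq_Ioi_of_lt_of_tendsto (fun _ => Nat.one_div_pos_of_nat)
      tendsto_one_div_add_atTop_nhds_zero_nat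
  have hnull : μ (Ioi 0) = 0 := hIoi ▸ measure_iUnion_null fun _ => hc _ Nat.one_div_pos_of_nat
  refine NeZero.ne μ (ae_eq_bot.1 (eventually_false_iff_eq_bot.1 ?_))
  filter_upwards [h, measure_eq_zero_iff_ae_notMem.1 hnull] with x hpos hnot using hnot hpos

lemma ProbabilityTheory.iIndepFun.iIndepSet_preimage {Ω ι E : Type*} [MeasurableSpace Ω]
    [MeasurableSpace E] {P : Measure Ω} {f : ι → Ω → E} (hind : iIndepFun f P)
    (hf : ∀ i, Measurable (f i)) {t : ι → Set E} (ht : ∀ i, MeasurableSet (t i)) :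
    iIndepSet (fun i => f i ⁻¹' t i) P :=
  (iIndepSet_iff_meas_biInter fun i => hf i (ht i)).2 fun S =>
    hind.measure_inter_preimage_eq_mul S fun i _ => ht i

lemma tendsto_sum_range_atTop_of_frequently_le {f : ℕ → ℝ} {c : ℝ} (hf : ∀ n, 0 ≤ f n)
    (hc : 0 < c) (hfreq : ∃ᶠ n in atTop, c ≤ f n) :
    Tendsto (fun n => ∑ k ∈ Finset.range n, f k) atTop atTop := by
  refine (not_summable_iff_tendsto_nat_atTop_of_nonneg hf).1 fun hsum => hfreq ?_
  filter_upwards [hsum.tendsto_atTop_zero.eventually (gt_mem_nhds hc)] with n hn using not_le.2 hn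

theorem ProbabilityTheory.iIndepFun.ae_tendsto_sum_range_atTop {Ω : Type*} [MeasurableSpace Ω]
    {P : Measure Ω} {G : ℕ → Ω → ℝ} {μ : Measure ℝ} (hind : iIndepFun G P)
    (hG : ∀ n, Measurable (G n)) (hlaw : ∀ n, P.map (G n) = μ) (hpos : ∀ᵐ x ∂μ, 0 < x) :
    ∀ᵐ ω ∂P, Tendsto (fun n => ∑ k ∈ Finset.range n, G k ω) atTop atTop := by
  have := hind.isProbabilityMeasure
  have : IsProbabilityMeasure μ := hlaw 0 ▸ Measure.isProbabilityMeasure_map (hG 0).aemeasurable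
  obtain ⟨c, hc, hμc⟩ := exists_pos_measure_Ici_ne_zero hpos
  set A : ℕ → Set Ω := fun n => G n ⁻¹' Ici c
  have hA : ∀ n, MeasurableSet (A n) := fun n => hG n measurableSet_Ici
  have hPA : ∀ n, P (A n) = μ (Ici c) := fun n => by
    rw [← hlaw n, Measure.map_apply (hG n) measurableSet_Ici]
  have hlimsup : P (limsup A atTop) = 1 :=
    measure_limsup_eq_one hA (hind.iIndepSet_preimage hG fun _ => measurableSet_Ici)
      (by simp only [hPA, ENNReal.tsum_const_eq_top_of_ne_zero hμc])
  filter_upwards [ae_forall_of_map_eq (fun n => (hG n).aemeasurable) hlaw hpos,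
    (mem_ae_iff_prob_eq_one (MeasurableSet.measurableSet_limsup hA)).2 hlimsup] with ω hω hlim
  exact tendsto_sum_range_atTop_of_frequently_le (fun n => (hω n).le) hc
    (mem_limsup_iff_frequently_mem.1 hlim)

lemma sum_Icc_one_eq_sum_range {M : Type*} [AddCommMonoid M] (f : ℕ → M) (n : ℕ) :
    ∑ j ∈ Finset.Icc 1 n, f j = ∑ k ∈ Finset.range n, f (k + 1) := by
  rw [Finset.range_eq_Ico, Finset.sum_Ico_add' f, ← Finset.Ico_add_one_right_eq_Icc]

section Pathwise

variable {b : ℝ} {w g x y : ℕ → ℝ}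

lemma pos_and_le_pow_mul_of_rec (hb : 0 < b) (hx : 0 < x 0) (hw : ∀ n, w n ∈ Ioc 0 1)
    (hrec : ∀ n, x (n + 1) = b * x n * w n) (n : ℕ) : 0 < x n ∧ x n ≤ b ^ n * x 0 := by
  induction n with
  | zero => simpa using hx
  | succ n ih =>
    obtain ⟨hxn, hle⟩ := ih
    obtain ⟨hw0, hw1⟩ := hw n
    rw [hrec n, pow_succ]
    refine ⟨by positivity, ?_⟩
    calc b * x n * w n ≤ b * x n := mul_le_of_le_one_right (by positivity) hw1
      _ ≤ b * (b ^ n * x 0) := by gcongr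
      _ = b ^ n * b * x 0 := by ring

theorem tendsto_sum_Icc_pow_mul_atTop (hb : 0 < b) (hx : 0 < x 0) (hw : ∀ n, w n ∈ Ioc 0 1)
    (hrec : ∀ n, x (n + 1) = b * x n * w n) (hy : ∀ n, y (n + 1) = g n / x (n + 1))
    (hg : ∀ n, 0 ≤ g n) (hgsum : Tendsto (fun n => ∑ k ∈ Finset.range n, g k) atTop atTop) :
    Tendsto (fun n => ∑ j ∈ Finset.Icc 1 n, b ^ j * y j) atTop atTop := by
  have hterm : ∀ k, g k / x 0 ≤ b ^ (k + 1) * y (k + 1) := fun k => by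
    obtain ⟨hpos, hle⟩ := pos_and_le_pow_mul_of_rec hb hx hw hrec (k + 1)
    rw [hy k, mul_div_assoc', div_le_div_iff₀ hx hpos]
    linarith [mul_le_mul_of_nonneg_left hle (hg k)]
  refine tendsto_atTop_mono (fun n => ?_) (hgsum.atTop_div_const hx)
  rw [sum_Icc_one_eq_sum_range, Finset.sum_div]
  exact Finset.sum_le_sum fun k _ => hterm k

end Pathwise

theorem sum_obs_diverges_general
    {Ω : Type*} [MeasurableSpace Ω] (P : Measure Ω)
    (α β b : ℝ) (hb : 0 < b)
    (W G : ℕ → Ω → ℝ) (X0 : Ω → ℝ) (X Y : ℕ → Ω → ℝ)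
    (hWm : ∀ n, Measurable (W n)) (hGm : ∀ n, Measurable (G n))
    (hW : ∀ n, Measure.map (W n) P = betaMeas α β)
    (hG : ∀ n, Measure.map (G n) P = gammaMeas 1 β)
    (hindep : ProbabilityTheory.iIndepFun
      (Sum.elim W (Sum.elim G fun _ : Unit => X0)) P)
    (hX0pos : ∀ ω, 0 < X0 ω)
    (hX0 : X 0 = X0) (hXrec : ∀ n ω, X (n + 1) ω = b * X n ω * W n ω)
    (hY : ∀ n ω, Y (n + 1) ω = G n ω / X (n + 1) ω)
    :
    ∀ᵐ ω ∂P, Filter.Tendsto (fun n => ∑ j ∈ Finset.Icc 1 n, b ^ j * Y j ω)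
      Filter.atTop Filter.atTop := by
  have hGindep : iIndepFun G P :=
    hindep.precomp (g := fun n => Sum.inr (Sum.inl n)) fun m n h => by simpa using h
  filter_upwards
    [ae_forall_of_map_eq (fun n => (hWm n).aemeasurable) hW (ae_mem_Ioo_betaMeas α β),
    ae_forall_of_map_eq (fun n => (hGm n).aemeasurable) hG (ae_pos_gammaMeas 1 β),
    hGindep.ae_tendsto_sum_range_atTop hGm hG (ae_pos_gammaMeas 1 β)] with ω hWω hGω hsumω
  exact tendsto_sum_Icc_pow_mul_atTop (x := (X · ω)) hb (hX0 ▸ hX0pos ω)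
    (fun n => Ioo_subset_Ioc_self (hWω n)) (hXrec · ω) (hY · ω) (fun n => (hGω n).le) hsumω

/-- Lemma 2 (consequence): if `E(X₀^β) < ∞` then `∑_{j=1}^∞ b^j Y_j = +∞`
almost surely. -/
theorem sum_obs_diverges
    {Ω : Type*} [MeasurableSpace Ω] (P : Measure Ω) [IsProbabilityMeasure P]
    (α β b : ℝ) (hα : 0 < α) (hβ : 0 < β) (hb : 0 < b)
    (W G : ℕ → Ω → ℝ) (X0 : Ω → ℝ) (X Y : ℕ → Ω → ℝ)
    (hWm : ∀ n, Measurable (W n)) (hGm : ∀ n, Measurable (G n)) (hX0m : Measurable X0)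
    (hW : ∀ n, Measure.map (W n) P = betaMeas α β)
    (hG : ∀ n, Measure.map (G n) P = gammaMeas 1 β)
    (hindep : ProbabilityTheory.iIndepFun
      (Sum.elim W (Sum.elim G fun _ : Unit => X0)) P)
    (hX0pos : ∀ ω, 0 < X0 ω)
    (hX0 : X 0 = X0) (hXrec : ∀ n ω, X (n + 1) ω = b * X n ω * W n ω)
    (hY : ∀ n ω, Y (n + 1) ω = G n ω / X (n + 1) ω)
    (hX0int : Integrable (fun ω => X0 ω ^ β) P)
    :
    ∀ᵐ ω ∂P, Filter.Tendsto (fun n => ∑ j ∈ Finset.Icc 1 n, b ^ j * Y j ω)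
      Filter.atTop Filter.atTop :=
  sum_obs_diverges_general P α β b hb W G X0 X Y hWm hGm hW hG hindep hX0pos hX0 hXrec hY
end

section
/- Assume E(X_0^β) < ∞, let δ > 0 be such that δ^β E(W_1^β) < 1, and define the random index J_δ = inf{k ≥ 1 : b^j Y_j > δ^j for all j ≥ k}. Then for every s ≥ 0 with e^s δ^β E(W_1^β) < 1, the exponential moment E(e^{s J_δ}) is finite. -/
/-!
Since `Xₙ = bⁿ X₀ W₀ ⋯ W_{n-1}`, the event `bⁿ Yₙ ≤ δⁿ` is `G_{n-1} ≤ δⁿ X₀ W₀ ⋯ W_{n-1}`.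
The Gamma variable is independent of the product and `P(G ≤ t) ≤ t^β / Γ(β + 1)`, so this
event has probability at most `C ρⁿ` with `C = E(X₀^β) / Γ(β + 1)` and `ρ = δ^β E(W₁^β)`.
A union bound over `j ≥ n` gives `P(J_δ > n) ≤ C ρⁿ / (1 - ρ)`. Finally
`e^{s J_δ} ≤ e^s + ∑ₙ e^{s(n+2)} 1{J_δ > n + 1}` pointwise, also where `J_δ = ∞` because
`s ≥ 0`, and the expectation of the right side is dominated by a geometric series of ratio
`e^s ρ < 1`.
-/

open MeasureTheory Set

/-- The random index `J_δ = inf {k ≥ 1 : b^j Y_j > δ^j for all j ≥ k}`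
(with value `⊤` if no such `k` exists). -/
noncomputable def Jdelta {Ω : Type*} (b δ : ℝ) (Y : ℕ → Ω → ℝ) (ω : Ω) : ℕ∞ :=
  sInf ((↑) '' {k : ℕ | 1 ≤ k ∧ ∀ j, k ≤ j → δ ^ j < b ^ j * Y j ω})

open ProbabilityTheory
open scoped ENNReal

lemma betaMeas_compl_Ioo (a c : ℝ) : betaMeas a c (Ioo 0 1)ᶜ = 0 := by
  rw [betaMeas, withDensity_apply _ measurableSet_Ioo.compl]
  exact setLIntegral_eq_zero measurableSet_Ioo.compl fun x hx => by
    simp [if_neg (show ¬(0 < x ∧ x < 1) from hx)]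

lemma ae_mem_Ioo_of_map_eq_betaMeas {Ω : Type*} [MeasurableSpace Ω] {μ : Measure Ω}
    {V : Ω → ℝ} (hV : AEMeasurable V μ) {a c : ℝ} (h : μ.map V = betaMeas a c) :
    ∀ᵐ ω ∂μ, V ω ∈ Ioo 0 1 := by
  refine ae_of_ae_map hV ?_
  rw [h, ae_iff]
  exact betaMeas_compl_Ioo a c

lemma ofReal_integral_rpow_eq_lintegral_of_map_eq_betaMeas {Ω : Type*} [MeasurableSpace Ω]
    {μ : Measure Ω} [IsFiniteMeasure μ] {V : Ω → ℝ} (hV : Measurable V) {a c β : ℝ} (hβ : 0 ≤ β)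
    (h : μ.map V = betaMeas a c) :
    ENNReal.ofReal (∫ ω, V ω ^ β ∂μ) = ∫⁻ ω, ENNReal.ofReal (V ω ^ β) ∂μ := by
  have hV01 := ae_mem_Ioo_of_map_eq_betaMeas hV.aemeasurable h
  refine ofReal_integral_eq_lintegral_ofReal (Integrable.of_bound
    (hV.pow_const β).aestronglyMeasurable 1 (hV01.mono fun ω hω => ?_))
    (hV01.mono fun ω hω => Real.rpow_nonneg hω.1.le β)
  rw [Real.norm_of_nonneg (Real.rpow_nonneg hω.1.le β)]
  exact Real.rpow_le_one hω.1.le hω.2.le hβ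

lemma gammaMeas_Iic_le {β : ℝ} (hβ : 0 < β) {t : ℝ} (ht : 0 < t) :
    gammaMeas 1 β (Iic t) ≤ ENNReal.ofReal (t ^ β / Real.Gamma (β + 1)) := by
  have hdensity : ∀ x ∈ Iic t, ENNReal.ofReal
      (if 0 < x then 1 ^ β * x ^ (β - 1) * Real.exp (-(1 * x)) / Real.Gamma β else 0) ≤
      (Ioc 0 t).indicator (fun x => ENNReal.ofReal (x ^ (β - 1) / Real.Gamma β)) x := by
    intro x hxt
    by_cases hx : 0 < x
    · rw [if_pos hx, indicator_of_mem (show x ∈ Ioc 0 t from ⟨hx, hxt⟩), Real.one_rpow, one_mul,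
        one_mul]
      gcongr
      exact mul_le_of_le_one_right (by positivity) (Real.exp_le_one_iff.2 (by linarith))
    · simp [if_neg hx]
  have hint : IntegrableOn (fun x : ℝ => x ^ (β - 1) / Real.Gamma β) (Ioc 0 t) :=
    ((intervalIntegrable_iff_integrableOn_Ioc_of_le ht.le).mp
      (intervalIntegral.intervalIntegrable_rpow' (by linarith))).div_const _
  calc gammaMeas 1 β (Iic t)
      ≤ ∫⁻ x in Iic t,
          (Ioc 0 t).indicator (fun x => ENNReal.ofReal (x ^ (β - 1) / Real.Gamma β)) x := by
        rw [gammaMeas, withDensity_apply _ measurableSet_Iic]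
        exact setLIntegral_mono' measurableSet_Iic hdensity
    _ = ∫⁻ x in Ioc 0 t, ENNReal.ofReal (x ^ (β - 1) / Real.Gamma β) := by
        rw [lintegral_indicator measurableSet_Ioc, Measure.restrict_restrict measurableSet_Ioc,
          inter_eq_left.2 Ioc_subset_Iic_self]
    _ = ENNReal.ofReal (∫ x in Ioc 0 t, x ^ (β - 1) / Real.Gamma β) :=
        (ofReal_integral_eq_lintegral_ofReal hint ((ae_restrict_iff' measurableSet_Ioc).2
          (.of_forall fun x hx => by have := hx.1; positivity))).symm
    _ = ENNReal.ofReal (t ^ β / Real.Gamma (β + 1)) := by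
        rw [integral_div, ← intervalIntegral.integral_of_le ht.le,
          integral_rpow (Or.inl (by linarith)), sub_add_cancel, Real.zero_rpow hβ.ne', sub_zero,
          Real.Gamma_add_one hβ.ne', div_div]

lemma measure_le_eq_lintegral_of_indepFun {Ω : Type*} [MeasurableSpace Ω] {μ : Measure Ω}
    [IsFiniteMeasure μ] {T V : Ω → ℝ} (hT : Measurable T) (hV : Measurable V)
    (hTV : IndepFun T V μ) :
    μ {ω | V ω ≤ T ω} = ∫⁻ ω, μ.map V (Iic (T ω)) ∂μ := by
  have hle : MeasurableSet {p : ℝ × ℝ | p.2 ≤ p.1} := measurableSet_le measurable_snd measurable_fst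
  rw [show {ω | V ω ≤ T ω} = (fun ω => (T ω, V ω)) ⁻¹' {p | p.2 ≤ p.1} from rfl,
    ← Measure.map_apply (hT.prodMk hV) hle,
    (indepFun_iff_map_prod_eq_prod_map_map hT.aemeasurable hV.aemeasurable).1 hTV,
    Measure.prod_apply hle, lintegral_map (measurable_measure_prodMk_left hle) hT]
  rfl

lemma measure_le_le_lintegral_rpow_div_Gamma {Ω : Type*} [MeasurableSpace Ω]
    {μ : Measure Ω} [IsFiniteMeasure μ] {T V : Ω → ℝ} (hT : Measurable T) (hV : Measurable V)
    (hTV : IndepFun T V μ) {β : ℝ} (hβ : 0 < β) (hVlaw : μ.map V = gammaMeas 1 β)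
    (hTpos : ∀ᵐ ω ∂μ, 0 < T ω) :
    μ {ω | V ω ≤ T ω} ≤
      (∫⁻ ω, ENNReal.ofReal (T ω ^ β) ∂μ) / ENNReal.ofReal (Real.Gamma (β + 1)) := by
  rw [measure_le_eq_lintegral_of_indepFun hT hV hTV, hVlaw, div_eq_mul_inv,
    ← lintegral_mul_const' _ _ (by simp [(Real.Gamma_pos_of_pos (by linarith : 0 < β + 1))])]
  refine lintegral_mono_ae (hTpos.mono fun ω hω => ?_)
  rw [← div_eq_mul_inv, ← ENNReal.ofReal_div_of_pos (Real.Gamma_pos_of_pos (by linarith))]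
  exact gammaMeas_Iic_le hβ hω

lemma lintegral_ofReal_prod_rpow_of_iIndepFun {Ω ι : Type*} [MeasurableSpace Ω] {μ : Measure Ω}
    {f : ι → Ω → ℝ} (hf : iIndepFun f μ) (hm : ∀ i, Measurable (f i))
    {s : Finset ι} (hnn : ∀ i ∈ s, ∀ᵐ ω ∂μ, 0 ≤ f i ω) (β : ℝ) :
    ∫⁻ ω, ENNReal.ofReal ((∏ i ∈ s, f i ω) ^ β) ∂μ =
      ∏ i ∈ s, ∫⁻ ω, ENNReal.ofReal (f i ω ^ β) ∂μ := by
  have hφ : Measurable fun x : ℝ => ENNReal.ofReal (x ^ β) :=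
    (measurable_id.pow_const β).ennreal_ofReal
  rw [← lintegral_prod_eq_prod_lintegral_of_indepFun s (fun i ω => ENNReal.ofReal (f i ω ^ β))
    (hf.comp _ fun _ => hφ) fun i => hφ.comp (hm i)]
  refine lintegral_congr_ae ?_
  filter_upwards [(Filter.eventually_all_finset s).2 hnn] with ω hω
  rw [← Real.finsetProd_rpow _ _ hω, ENNReal.ofReal_prod_of_nonneg fun i hi =>
    Real.rpow_nonneg (hω i hi) β]

section Jdelta

variable {Ω : Type*} {b δ : ℝ} {Y : ℕ → Ω → ℝ}

lemma Jdelta_le_iff {n : ℕ} (hn : 1 ≤ n) (ω : Ω) :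
    Jdelta b δ Y ω ≤ n ↔ ∀ j ≥ n, δ ^ j < b ^ j * Y j ω := by
  rw [← ENat.lt_add_one_iff (ENat.natCast_ne_top n), Jdelta, sInf_lt_iff]
  constructor
  · rintro ⟨_, ⟨k, ⟨-, hk⟩, rfl⟩, hkn⟩ j hj
    have hkn : k ≤ n := by exact_mod_cast (ENat.lt_add_one_iff (ENat.natCast_ne_top n)).1 hkn
    exact hk j (hkn.trans hj)
  · exact fun h => ⟨n, ⟨n, ⟨hn, h⟩, rfl⟩, (ENat.lt_add_one_iff (ENat.natCast_ne_top n)).2 le_rfl⟩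

lemma lt_Jdelta_iff {n : ℕ} (hn : 1 ≤ n) (ω : Ω) :
    n < Jdelta b δ Y ω ↔ ∃ j ≥ n, b ^ j * Y j ω ≤ δ ^ j := by
  simp only [← not_le, Jdelta_le_iff hn, not_forall, not_not, exists_prop]

lemma measurableSet_lt_Jdelta [MeasurableSpace Ω]
    (hY : ∀ j ≥ 1, MeasurableSet {ω | b ^ j * Y j ω ≤ δ ^ j})
    {n : ℕ} (hn : 1 ≤ n) : MeasurableSet {ω | n < Jdelta b δ Y ω} := by
  have hunion : {ω | n < Jdelta b δ Y ω} = ⋃ j ≥ n, {ω | b ^ j * Y j ω ≤ δ ^ j} := by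
    ext ω
    simp [lt_Jdelta_iff hn]
  rw [hunion]
  exact MeasurableSet.biUnion (to_countable _) fun j hj => hY j (hn.trans hj)

lemma measure_lt_Jdelta_le [MeasurableSpace Ω] {μ : Measure Ω} {C ρ : ℝ≥0∞}
    (hbad : ∀ j ≥ 1, μ {ω | b ^ j * Y j ω ≤ δ ^ j} ≤ C * ρ ^ j) {n : ℕ} (hn : 1 ≤ n) :
    μ {ω | n < Jdelta b δ Y ω} ≤ C * (1 - ρ)⁻¹ * ρ ^ n := by
  have hsub : {ω | n < Jdelta b δ Y ω} ⊆ ⋃ i, {ω | b ^ (n + i) * Y (n + i) ω ≤ δ ^ (n + i)} := by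
    intro ω hω
    obtain ⟨j, hj, hjbad⟩ := (lt_Jdelta_iff hn ω).1 hω
    exact mem_iUnion.2 ⟨j - n, by rwa [Nat.add_sub_cancel' hj]⟩
  calc μ {ω | n < Jdelta b δ Y ω}
      ≤ ∑' i, μ {ω | b ^ (n + i) * Y (n + i) ω ≤ δ ^ (n + i)} :=
        (measure_mono hsub).trans (measure_iUnion_le _)
    _ ≤ ∑' i, C * ρ ^ n * ρ ^ i :=
        ENNReal.tsum_le_tsum fun i => (hbad _ (by omega)).trans_eq (by rw [pow_add, mul_assoc])
    _ = C * (1 - ρ)⁻¹ * ρ ^ n := by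
        rw [ENNReal.tsum_mul_left, ENNReal.tsum_geometric, mul_right_comm]

end Jdelta

lemma ite_top_pow_toNat_le {q : ℝ≥0∞} (hq : 1 ≤ q) (m : ℕ∞) :
    (if m = ⊤ then ⊤ else q ^ m.toNat) ≤
      q + ∑' n : ℕ, if ((n + 1 : ℕ) : ℕ∞) < m then q ^ (n + 2) else 0 := by
  induction m using ENat.recTopCoe with
  | top =>
    refine le_add_left (top_le_iff.2 (eq_top_mono (ENNReal.tsum_le_tsum fun n => ?_)
      (ENNReal.tsum_const_eq_top_of_ne_zero one_ne_zero)))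
    simpa using one_le_pow₀ hq
  | coe k =>
    simp only [ENat.natCast_ne_top, if_false, ENat.toNat_natCast]
    match k with
    | 0 => exact le_add_right (by simpa using hq)
    | 1 => exact le_add_right (by simp)
    | j + 2 =>
      refine le_add_left ((le_of_eq ?_).trans (ENNReal.le_tsum j))
      rw [if_pos (by exact_mod_cast (by omega : j + 1 < j + 2))]

lemma lintegral_exp_mul_toNat_lt_top {Ω : Type*} [MeasurableSpace Ω] {μ : Measure Ω}
    [IsFiniteMeasure μ] {N : Ω → ℕ∞} (hN : ∀ n : ℕ, 1 ≤ n → MeasurableSet {ω | n < N ω})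
    {s : ℝ} (hs : 0 ≤ s) {C r : ℝ≥0∞} (hC : C ≠ ⊤)
    (htail : ∀ n : ℕ, 1 ≤ n → μ {ω | n < N ω} ≤ C * r ^ n)
    (hsr : ENNReal.ofReal (Real.exp s) * r < 1) :
    ∫⁻ ω, (if N ω = ⊤ then ⊤ else ENNReal.ofReal (Real.exp (s * ((N ω).toNat : ℝ)))) ∂μ < ⊤ := by
  set q := ENNReal.ofReal (Real.exp s)
  have hq : 1 ≤ q := ENNReal.one_le_ofReal.2 (Real.one_le_exp hs)
  have hqtop : q ≠ ⊤ := ENNReal.ofReal_ne_top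
  have hexp (k : ℕ) : ENNReal.ofReal (Real.exp (s * k)) = q ^ k := by
    rw [mul_comm, Real.exp_nat_mul, ENNReal.ofReal_pow (Real.exp_nonneg s)]
  calc ∫⁻ ω, (if N ω = ⊤ then ⊤ else ENNReal.ofReal (Real.exp (s * ((N ω).toNat : ℝ)))) ∂μ
      ≤ ∫⁻ ω, q + ∑' n : ℕ, {ω | ((n + 1 : ℕ) : ℕ∞) < N ω}.indicator (fun _ => q ^ (n + 2)) ω ∂μ :=
        lintegral_mono fun ω => by
          simpa only [hexp, indicator_apply, mem_ofPred_eq] using ite_top_pow_toNat_le hq (N ω)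
    _ = q * μ univ + ∑' n : ℕ, q ^ (n + 2) * μ {ω | ((n + 1 : ℕ) : ℕ∞) < N ω} := by
        rw [lintegral_add_left measurable_const,
          lintegral_tsum fun n => (measurable_const.indicator (hN _ (by omega))).aemeasurable,
          lintegral_const, mul_comm]
        congr 1
        exact tsum_congr fun n => lintegral_indicator_const (hN _ (by omega)) _
    _ ≤ q * μ univ + ∑' n : ℕ, q ^ (n + 2) * (C * r ^ (n + 1)) := by
        gcongr with n
        exact htail _ (by omega)
    _ = q * μ univ + q * C * (q * r) * ∑' n : ℕ, (q * r) ^ n := by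
        rw [← ENNReal.tsum_mul_left]
        congr 1
        exact tsum_congr fun n => by ring
    _ < ⊤ := by
        rw [ENNReal.tsum_geometric]
        refine ENNReal.add_lt_top.2 ⟨ENNReal.mul_lt_top hqtop.lt_top (measure_lt_top μ univ), ?_⟩
        refine ENNReal.mul_lt_top (ENNReal.mul_lt_top (ENNReal.mul_lt_top hqtop.lt_top hC.lt_top)
          (hsr.trans ENNReal.one_lt_top)) ?_
        exact ENNReal.inv_lt_top.2 (tsub_pos_of_lt hsr)

lemma eq_pow_mul_mul_prod_of_succ_eq {x w : ℕ → ℝ} {b : ℝ} (h : ∀ n, x (n + 1) = b * x n * w n)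
    (n : ℕ) : x n = b ^ n * (x 0 * ∏ i ∈ Finset.range n, w i) := by
  induction n with
  | zero => simp
  | succ n ih => rw [h, ih, Finset.prod_range_succ, pow_succ]; ring

lemma pow_succ_mul_eq_div {Ω : Type*} {b : ℝ} (hb : b ≠ 0) {W G : ℕ → Ω → ℝ} {X0 : Ω → ℝ}
    {X Y : ℕ → Ω → ℝ} (hX0 : X 0 = X0) (hXrec : ∀ n ω, X (n + 1) ω = b * X n ω * W n ω)
    (hY : ∀ n ω, Y (n + 1) ω = G n ω / X (n + 1) ω) (m : ℕ) (ω : Ω) :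
    b ^ (m + 1) * Y (m + 1) ω = G m ω / (X0 ω * ∏ i ∈ Finset.range (m + 1), W i ω) := by
  rw [hY, eq_pow_mul_mul_prod_of_succ_eq (x := (X · ω)) (hXrec · ω), hX0, ← mul_div_assoc,
    mul_div_mul_left _ _ (pow_ne_zero _ hb)]

def indicesX0W (n : ℕ) : Finset (ℕ ⊕ (ℕ ⊕ Unit)) :=
  insert (.inr (.inr ())) ((Finset.range n).map .inl)

lemma prod_indicesX0W {Ω : Type*} {W G : ℕ → Ω → ℝ} {X0 : Ω → ℝ} (n : ℕ) (ω : Ω) :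
    ∏ j ∈ indicesX0W n, Sum.elim W (Sum.elim G fun _ : Unit => X0) j ω =
      X0 ω * ∏ i ∈ Finset.range n, W i ω := by
  simp [indicesX0W]

section HiddenMarkov

variable {Ω : Type*} [MeasurableSpace Ω] {P : Measure Ω} {W G : ℕ → Ω → ℝ} {X0 : Ω → ℝ}

lemma measurable_sumElim_W_G_X0 (hWm : ∀ n, Measurable (W n)) (hGm : ∀ n, Measurable (G n))
    (hX0m : Measurable X0) : ∀ j, Measurable (Sum.elim W (Sum.elim G fun _ : Unit => X0) j)
  | .inl i => hWm i
  | .inr (.inl i) => hGm i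
  | .inr (.inr _) => hX0m

lemma indepFun_X0_mul_prod_W (hWm : ∀ n, Measurable (W n)) (hGm : ∀ n, Measurable (G n))
    (hX0m : Measurable X0) (hindep : iIndepFun (Sum.elim W (Sum.elim G fun _ : Unit => X0)) P)
    (n m : ℕ) : IndepFun (fun ω => X0 ω * ∏ i ∈ Finset.range n, W i ω) (G m) P := by
  have h := hindep.indepFun_finsetProd_of_notMem (measurable_sumElim_W_G_X0 hWm hGm hX0m)
    (s := indicesX0W n) (i := .inr (.inl m)) (by simp [indicesX0W])
  have hprod : ∏ j ∈ indicesX0W n, Sum.elim W (Sum.elim G fun _ : Unit => X0) j =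
      fun ω => X0 ω * ∏ i ∈ Finset.range n, W i ω :=
    funext fun ω => by rw [Finset.prod_apply, prod_indicesX0W]
  rwa [hprod] at h

lemma lintegral_ofReal_rpow_X0_mul_prod_W (hWm : ∀ n, Measurable (W n))
    (hGm : ∀ n, Measurable (G n)) (hX0m : Measurable X0)
    (hindep : iIndepFun (Sum.elim W (Sum.elim G fun _ : Unit => X0)) P)
    (hWnn : ∀ i, ∀ᵐ ω ∂P, 0 ≤ W i ω) (hX0nn : ∀ᵐ ω ∂P, 0 ≤ X0 ω) (β : ℝ) (n : ℕ) :
    ∫⁻ ω, ENNReal.ofReal ((X0 ω * ∏ i ∈ Finset.range n, W i ω) ^ β) ∂P =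
      (∫⁻ ω, ENNReal.ofReal (X0 ω ^ β) ∂P) *
        ∏ i ∈ Finset.range n, ∫⁻ ω, ENNReal.ofReal (W i ω ^ β) ∂P := by
  have hnn : ∀ j ∈ indicesX0W n, ∀ᵐ ω ∂P, 0 ≤ Sum.elim W (Sum.elim G fun _ : Unit => X0) j ω := by
    simp only [indicesX0W, Finset.mem_insert, Finset.mem_map]
    rintro j (rfl | ⟨i, -, rfl⟩)
    exacts [hX0nn, hWnn i]
  simp_rw [← prod_indicesX0W (G := G)]
  rw [lintegral_ofReal_prod_rpow_of_iIndepFun hindep (measurable_sumElim_W_G_X0 hWm hGm hX0m) hnn]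
  simp [indicesX0W]

lemma measure_div_X0_mul_prod_W_le [IsProbabilityMeasure P] {α β δ : ℝ} (hβ : 0 < β)
    (hδ : 0 < δ) (hWm : ∀ n, Measurable (W n)) (hGm : ∀ n, Measurable (G n))
    (hX0m : Measurable X0) (hW : ∀ n, P.map (W n) = betaMeas α β)
    (hG : ∀ n, P.map (G n) = gammaMeas 1 β)
    (hindep : iIndepFun (Sum.elim W (Sum.elim G fun _ : Unit => X0)) P)
    (hX0pos : ∀ ω, 0 < X0 ω) (m n : ℕ) :
    P {ω | G m ω / (X0 ω * ∏ i ∈ Finset.range n, W i ω) ≤ δ ^ n} ≤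
      (∫⁻ ω, ENNReal.ofReal (X0 ω ^ β) ∂P) / ENNReal.ofReal (Real.Gamma (β + 1)) *
        (ENNReal.ofReal (δ ^ β) * ∫⁻ ω, ENNReal.ofReal (W 0 ω ^ β) ∂P) ^ n := by
  set D : Ω → ℝ := fun ω => X0 ω * ∏ i ∈ Finset.range n, W i ω
  have hφ : Measurable fun x : ℝ => ENNReal.ofReal (x ^ β) :=
    (measurable_id.pow_const β).ennreal_ofReal
  have hWae : ∀ᵐ ω ∂P, ∀ i, W i ω ∈ Ioo 0 1 :=
    ae_all_iff.2 fun i => ae_mem_Ioo_of_map_eq_betaMeas (hWm i).aemeasurable (hW i)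
  have hDpos : ∀ᵐ ω ∂P, 0 < D ω := hWae.mono fun ω hω =>
    mul_pos (hX0pos ω) (Finset.prod_pos fun i _ => (hω i).1)
  have hDm : Measurable D := hX0m.mul (Finset.measurable_prod _ fun i _ => hWm i)
  have hEW (i : ℕ) : ∫⁻ ω, ENNReal.ofReal (W i ω ^ β) ∂P = ∫⁻ ω, ENNReal.ofReal (W 0 ω ^ β) ∂P := by
    rw [← lintegral_map hφ (hWm i), hW i, ← hW 0, lintegral_map hφ (hWm 0)]
  have hsplit : ∀ᵐ ω ∂P, ENNReal.ofReal ((δ ^ n * D ω) ^ β) =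
      ENNReal.ofReal (δ ^ β) ^ n * ENNReal.ofReal (D ω ^ β) := hDpos.mono fun ω hω => by
    rw [Real.mul_rpow (by positivity) hω.le, ENNReal.ofReal_mul (by positivity),
      ← Real.rpow_pow_comm hδ.le, ENNReal.ofReal_pow (by positivity)]
  calc P {ω | G m ω / D ω ≤ δ ^ n}
      ≤ P {ω | G m ω ≤ δ ^ n * D ω} :=
        measure_mono_ae (hDpos.mono fun ω hω h => (div_le_iff₀ hω).1 h)
    _ ≤ (∫⁻ ω, ENNReal.ofReal ((δ ^ n * D ω) ^ β) ∂P) / ENNReal.ofReal (Real.Gamma (β + 1)) :=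
        measure_le_le_lintegral_rpow_div_Gamma (measurable_const.mul hDm) (hGm m)
          ((indepFun_X0_mul_prod_W hWm hGm hX0m hindep n m).comp (measurable_const_mul _)
            measurable_id) hβ (hG m) (hDpos.mono fun ω hω => mul_pos (pow_pos hδ n) hω)
    _ = _ := by
        rw [lintegral_congr_ae hsplit, lintegral_const_mul _ (hDm.pow_const β).ennreal_ofReal,
          lintegral_ofReal_rpow_X0_mul_prod_W hWm hGm hX0m hindep
            (fun i => (hWae.mono fun ω hω => (hω i).1.le)) (.of_forall fun ω => (hX0pos ω).le),
          Finset.prod_congr rfl fun i _ => hEW i, Finset.prod_const, Finset.card_range]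
        simp only [div_eq_mul_inv]
        ring

end HiddenMarkov

theorem Jdelta_exponential_moment_general
    {Ω : Type*} [MeasurableSpace Ω] (P : Measure Ω) [IsProbabilityMeasure P]
    (α β b : ℝ) (hβ : 0 < β) (hb : 0 < b)
    (W G : ℕ → Ω → ℝ) (X0 : Ω → ℝ) (X Y : ℕ → Ω → ℝ)
    (hWm : ∀ n, Measurable (W n)) (hGm : ∀ n, Measurable (G n)) (hX0m : Measurable X0)
    (hW : ∀ n, Measure.map (W n) P = betaMeas α β)
    (hG : ∀ n, Measure.map (G n) P = gammaMeas 1 β)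
    (hindep : ProbabilityTheory.iIndepFun
      (Sum.elim W (Sum.elim G fun _ : Unit => X0)) P)
    (hX0pos : ∀ ω, 0 < X0 ω)
    (hX0 : X 0 = X0) (hXrec : ∀ n ω, X (n + 1) ω = b * X n ω * W n ω)
    (hY : ∀ n ω, Y (n + 1) ω = G n ω / X (n + 1) ω)
    (hX0int : Integrable (fun ω => X0 ω ^ β) P)
    (δ : ℝ) (hδ : 0 < δ) (hr : δ ^ β * (∫ ω, W 0 ω ^ β ∂P) < 1)
    (s : ℝ) (hs : 0 ≤ s) (hsr : Real.exp s * (δ ^ β * ∫ ω, W 0 ω ^ β ∂P) < 1) :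
    (∫⁻ ω, (if Jdelta b δ Y ω = ⊤ then (⊤ : ENNReal)
      else ENNReal.ofReal (Real.exp (s * ((Jdelta b δ Y ω).toNat : ℝ)))) ∂P) < ⊤ := by
  have hbad (j : ℕ) (hj : 1 ≤ j) : {ω | b ^ j * Y j ω ≤ δ ^ j} =
      {ω | G (j - 1) ω / (X0 ω * ∏ i ∈ Finset.range j, W i ω) ≤ δ ^ j} := by
    obtain ⟨m, rfl⟩ := Nat.exists_eq_add_of_le' hj
    simp_rw [pow_succ_mul_eq_div hb.ne' hX0 hXrec hY, Nat.add_sub_cancel]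
  have hW0 := ofReal_integral_rpow_eq_lintegral_of_map_eq_betaMeas (hWm 0) hβ.le (hW 0)
  set ρ := ENNReal.ofReal (δ ^ β) * ∫⁻ ω, ENNReal.ofReal (W 0 ω ^ β) ∂P with hρdef
  have hρ : ρ = ENNReal.ofReal (δ ^ β * ∫ ω, W 0 ω ^ β ∂P) := by
    rw [hρdef, ← hW0, ENNReal.ofReal_mul (by positivity)]
  have hC : (∫⁻ ω, ENNReal.ofReal (X0 ω ^ β) ∂P) / ENNReal.ofReal (Real.Gamma (β + 1)) *
      (1 - ρ)⁻¹ ≠ ⊤ := by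
    refine ENNReal.mul_ne_top (ENNReal.div_lt_top hX0int.lintegral_lt_top.ne ?_).ne
      (ENNReal.inv_ne_top.2 (tsub_pos_of_lt (hρ ▸ ENNReal.ofReal_lt_one.2 hr)).ne')
    exact (ENNReal.ofReal_pos.2 (Real.Gamma_pos_of_pos (by linarith))).ne'
  refine lintegral_exp_mul_toNat_lt_top
    (fun n hn => measurableSet_lt_Jdelta (fun j hj => ?_) hn) hs hC
    (fun n hn => measure_lt_Jdelta_le (fun j hj => ?_) hn) ?_
  · rw [hbad j hj]
    exact measurableSet_le ((hGm _).div (hX0m.mul (Finset.measurable_prod _ fun i _ => hWm i)))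
      measurable_const
  · rw [hbad j hj]
    exact measure_div_X0_mul_prod_W_le hβ hδ hWm hGm hX0m hW hG hindep hX0pos (j - 1) j
  · rwa [hρ, ← ENNReal.ofReal_mul (Real.exp_nonneg s), ENNReal.ofReal_lt_one]

/-- Finiteness of the exponential moment `E(e^{s J_δ})` for
`e^s δ^β E(W₁^β) < 1`. -/
theorem Jdelta_exponential_moment
    {Ω : Type*} [MeasurableSpace Ω] (P : Measure Ω) [IsProbabilityMeasure P]
    (α β b : ℝ) (hα : 0 < α) (hβ : 0 < β) (hb : 0 < b)
    (W G : ℕ → Ω → ℝ) (X0 : Ω → ℝ) (X Y : ℕ → Ω → ℝ)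
    (hWm : ∀ n, Measurable (W n)) (hGm : ∀ n, Measurable (G n)) (hX0m : Measurable X0)
    (hW : ∀ n, Measure.map (W n) P = betaMeas α β)
    (hG : ∀ n, Measure.map (G n) P = gammaMeas 1 β)
    (hindep : ProbabilityTheory.iIndepFun
      (Sum.elim W (Sum.elim G fun _ : Unit => X0)) P)
    (hX0pos : ∀ ω, 0 < X0 ω)
    (hX0 : X 0 = X0) (hXrec : ∀ n ω, X (n + 1) ω = b * X n ω * W n ω)
    (hY : ∀ n ω, Y (n + 1) ω = G n ω / X (n + 1) ω)
    (hX0int : Integrable (fun ω => X0 ω ^ β) P)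
    (δ : ℝ) (hδ : 0 < δ) (hr : δ ^ β * (∫ ω, W 0 ω ^ β ∂P) < 1)
    (s : ℝ) (hs : 0 ≤ s) (hsr : Real.exp s * (δ ^ β * ∫ ω, W 0 ω ^ β ∂P) < 1) :
    (∫⁻ ω, (if Jdelta b δ Y ω = ⊤ then (⊤ : ENNReal)
      else ENNReal.ofReal (Real.exp (s * ((Jdelta b δ Y ω).toNat : ℝ)))) ∂P) < ⊤ :=
  Jdelta_exponential_moment_general P α β b hβ hb W G X0 X Y hWm hGm hX0m hW hG hindep hX0pos hX0
    hXrec hY hX0int δ hδ hr s hs hsr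
end
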